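/- arXiv:1206.4195 — 2 statements merged into one kernel-verified Lean document; each statement's English description precedes it below -/
import Mathlib

section
/- For every n ∈ ℕ and every real u, Σ_{j=0}^n binom(n,j) u^j (1−u)^{n−j} F(j) = (2/π) · ∫_0^1 t^{−1/2} (1−t)^{1/2} (1−2ut)^n dt. -/
/-!
The substitution `t = (1 - cos x) / 2 = sin² (x / 2)` turns `t^{-1/2} (1 - t)^{1/2} dt` into
`(1 + cos x) / 2 dx` on `[0, π]` and `1 - 2ut` into `u cos x + (1 - u)`. Expanding the `n`-th power
binomially leaves the integrals `∫₀^π (1 + cos x) / 2 · cos^j x dx`, which the Wallis formulas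
`∫₀^π cos^{2m} = π C(2m, m) / 4^m`, `∫₀^π cos^{2m+1} = 0` evaluate to `π/2 · F(j)`, using
`F(2m+1) = F(2m+2)` for odd `j`.
-/

/-- `F(m) = C(m, ⌊m/2⌋) · 2^{−m}`. -/
noncomputable def F' (m : ℕ) : ℝ := (m.choose (m / 2) : ℝ) / 2 ^ m

open Real MeasureTheory Set Finset

theorem F'_two_mul (m : ℕ) : F' (2 * m) = m.centralBinom / 4 ^ m := by
  rw [F', Nat.mul_div_cancel_left m two_pos, pow_mul, Nat.centralBinom]
  norm_num

theorem F'_two_mul_add_one (m : ℕ) : F' (2 * m + 1) = F' (2 * (m + 1)) := by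
  have hdiv : (2 * m + 1) / 2 = m := by omega
  have hchoose : (2 * (m + 1)).choose (m + 1) = 2 * (2 * m + 1).choose m := by
    rw [show 2 * (m + 1) = 2 * m + 1 + 1 by ring, Nat.choose_succ_succ, Nat.choose_symm_half]
    ring
  rw [F', F', hdiv, Nat.mul_div_cancel_left _ two_pos, hchoose, pow_succ, mul_add_one 2 m,
    pow_succ]
  push_cast
  ring

theorem integral_cos_pow_two_mul_add_one (m : ℕ) : ∫ x in (0:ℝ)..π, cos x ^ (2 * m + 1) = 0 := by
  induction m with
  | zero => simp
  | succ k ih =>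
    rw [show 2 * (k + 1) + 1 = 2 * k + 1 + 2 by ring, integral_cos_pow, ih]
    simp

theorem integral_cos_pow_two_mul (m : ℕ) :
    ∫ x in (0:ℝ)..π, cos x ^ (2 * m) = π * m.centralBinom / 4 ^ m := by
  induction m with
  | zero => simp
  | succ k ih =>
    have hrec : ((k:ℝ) + 1) * (k + 1).centralBinom = 2 * (2 * k + 1) * k.centralBinom := by
      exact_mod_cast Nat.succ_mul_centralBinom_succ k
    rw [show 2 * (k + 1) = 2 * k + 2 by ring, integral_cos_pow, ih]
    simp only [sin_pi, sin_zero, mul_zero, sub_zero, zero_div, zero_add]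
    have hk : (k:ℝ) + 1 ≠ 0 := by positivity
    field_simp
    push_cast
    linear_combination (-2 * 4 ^ k : ℝ) * hrec

theorem integral_one_add_cos_div_two_mul_cos_pow (j : ℕ) :
    ∫ x in (0:ℝ)..π, (1 + cos x) / 2 * cos x ^ j = π / 2 * F' j := by
  have hsplit : ∫ x in (0:ℝ)..π, (1 + cos x) / 2 * cos x ^ j
      = ((∫ x in (0:ℝ)..π, cos x ^ j) + ∫ x in (0:ℝ)..π, cos x ^ (j + 1)) / 2 := by
    have hint (k : ℕ) : IntervalIntegrable (fun x => cos x ^ k) volume 0 π :=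
      (continuous_cos.pow k).intervalIntegrable 0 π
    rw [← intervalIntegral.integral_add (hint j) (hint (j + 1)), ← intervalIntegral.integral_div]
    congr 1 with x
    ring
  rw [hsplit]
  rcases Nat.even_or_odd' j with ⟨m, rfl | rfl⟩
  · rw [integral_cos_pow_two_mul, integral_cos_pow_two_mul_add_one, F'_two_mul]
    ring
  · rw [integral_cos_pow_two_mul_add_one, show 2 * m + 1 + 1 = 2 * (m + 1) by ring,
      integral_cos_pow_two_mul, F'_two_mul_add_one, F'_two_mul]
    ring

theorem integral_zero_one_eq_integral_sin_div_two_mul (g : ℝ → ℝ) :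
    ∫ t in (0:ℝ)..1, g t = ∫ x in (0:ℝ)..π, sin x / 2 * g ((1 - cos x) / 2) := by
  have h := integral_Icc_deriv_smul_of_deriv_nonneg (f := fun x => (1 - cos x) / 2)
    (f' := fun x => sin x / 2) (g := g) (by fun_prop)
    (fun x _ => by simpa using ((hasDerivAt_cos x).const_sub 1).div_const 2)
    (fun x hx => div_nonneg (sin_nonneg_of_mem_Icc (Ioo_subset_Icc_self hx)) zero_le_two)
    pi_pos.le
  rw [intervalIntegral.integral_of_le zero_le_one, intervalIntegral.integral_of_le pi_pos.le,
    ← integral_Icc_eq_integral_Ioc, ← integral_Icc_eq_integral_Ioc]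
  simpa using h.symm

theorem sin_div_two_mul_rpow_mul_rpow {x : ℝ} (hx : x ∈ Ioc 0 π) :
    sin x / 2 * (((1 - cos x) / 2) ^ (-(1/2) : ℝ) * (1 - (1 - cos x) / 2) ^ ((1/2) : ℝ))
      = (1 + cos x) / 2 := by
  obtain ⟨y, rfl⟩ : ∃ y, x = 2 * y := ⟨x / 2, by ring⟩
  have hsin : 0 < sin y := sin_pos_of_pos_of_lt_pi (by linarith [hx.1]) (by linarith [hx.2, pi_pos])
  have hcos : 0 ≤ cos y := cos_nonneg_of_mem_Icc ⟨by linarith [hx.1, pi_pos], by linarith [hx.2]⟩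
  have hsq : (1 - cos (2 * y)) / 2 = sin y ^ 2 := by rw [cos_two_mul, ← sin_sq_add_cos_sq y]; ring
  rw [hsq, ← cos_sq', rpow_neg (sq_nonneg _), ← sqrt_eq_rpow, ← sqrt_eq_rpow, sqrt_sq hsin.le,
    sqrt_sq hcos, sin_two_mul, cos_two_mul]
  field_simp
  ring

theorem integral_rpow_mul_rpow_mul_eq_integral_cos (g : ℝ → ℝ) :
    ∫ t in (0:ℝ)..1, t ^ (-(1/2) : ℝ) * (1 - t) ^ ((1/2) : ℝ) * g t
      = ∫ x in (0:ℝ)..π, (1 + cos x) / 2 * g ((1 - cos x) / 2) := by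
  rw [integral_zero_one_eq_integral_sin_div_two_mul]
  refine intervalIntegral.integral_congr_ae (Filter.Eventually.of_forall fun x hx => ?_)
  -- `Ι 0 π = Ioc 0 π` excludes `x = 0`, where the Jacobian `sin x / 2` vanishes but `(1 + cos x) / 2`
  -- does not.
  rw [uIoc_of_le pi_pos.le] at hx
  rw [← sin_div_two_mul_rpow_mul_rpow hx]
  ring

theorem integral_one_add_cos_div_two_mul_pow (n : ℕ) (u : ℝ) :
    ∫ x in (0:ℝ)..π, (1 + cos x) / 2 * (u * cos x + (1 - u)) ^ n
      = ∑ j ∈ range (n + 1), (n.choose j : ℝ) * u ^ j * (1 - u) ^ (n - j) * (π / 2 * F' j) := by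
  simp_rw [add_pow, mul_sum]
  rw [intervalIntegral.integral_finsetSum fun j _ =>
    Continuous.intervalIntegrable (by fun_prop) _ _]
  refine sum_congr rfl fun j _ => ?_
  rw [← integral_one_add_cos_div_two_mul_cos_pow, ← intervalIntegral.integral_const_mul]
  congr 1 with x
  ring

/-- For every `n` and real `u`, the Euler integral representation
`Σ_{j=0}^n C(n,j) u^j (1−u)^{n−j} F(j) = (2/π) ∫_0^1 t^{−1/2} (1−t)^{1/2} (1−2ut)^n dt`. -/
theorem binomial_expectation_eq_integral (n : ℕ) (u : ℝ) :
    ∑ j ∈ Finset.range (n + 1), (n.choose j : ℝ) * u ^ j * (1 - u) ^ (n - j) * F' j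
      = (2 / Real.pi) *
          ∫ t in (0:ℝ)..1, t ^ (-(1/2) : ℝ) * (1 - t) ^ ((1/2) : ℝ) * (1 - 2 * u * t) ^ n := by
  have hsubst (x : ℝ) : 1 - 2 * u * ((1 - cos x) / 2) = u * cos x + (1 - u) := by ring
  rw [integral_rpow_mul_rpow_mul_eq_integral_cos fun t => (1 - 2 * u * t) ^ n]
  simp only [hsubst]
  rw [integral_one_add_cos_div_two_mul_pow, mul_sum]
  refine sum_congr rfl fun j _ => ?_
  field_simp
end

section
/- Suppose the fixed point set Fix(T) = {y ∈ C : Ty = y} is nonempty. Then for every n ≥ 1, ‖x_n − T x_n‖ · √(Σ_{i=1}^n α_i(1−α_i)) ≤ dist(x_0, Fix(T)) (in fact the sharper estimate ‖x_{n−1} − T x_{n−1}‖ · √(Σ_{i=1}^n α_i(1−α_i)) ≤ dist(x_0, Fix(T)) holds). -/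
/-!
Fix a fixed point `y`. The Hilbert-space identity
`‖(1 - a) u + a v‖² = (1 - a) ‖u‖² + a ‖v‖² - a (1 - a) ‖u - v‖²` with `u = x_k - y`,
`v = T x_k - y`, together with `‖T x_k - y‖ ≤ ‖x_k - y‖`, gives the Fejér inequality
`‖x_{k+1} - y‖² + α_{k+1} (1 - α_{k+1}) ‖x_k - T x_k‖² ≤ ‖x_k - y‖²`.
Summing it and using that the residuals `‖x_k - T x_k‖` are nonincreasing yields
`(Σ_{i=1}^n α_i (1 - α_i)) ‖x_{n-1} - T x_{n-1}‖² ≤ ‖x_0 - y‖²`; it remains to take square roots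
and the infimum over `y`.
-/

open Finset

lemma norm_one_sub_smul_add_smul_sq {F : Type*} [NormedAddCommGroup F] [InnerProductSpace ℝ F]
    (a : ℝ) (u v : F) :
    ‖(1 - a) • u + a • v‖ ^ 2 = (1 - a) * ‖u‖ ^ 2 + a * ‖v‖ ^ 2 - a * (1 - a) * ‖u - v‖ ^ 2 := by
  simp only [← real_inner_self_eq_norm_sq, inner_add_left, inner_add_right, inner_sub_left,
    inner_sub_right, real_inner_smul_left, real_inner_smul_right, real_inner_comm v u]
  ring

lemma norm_one_sub_smul_add_smul_sub_sq_add_le {F : Type*} [NormedAddCommGroup F]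
    [InnerProductSpace ℝ F] {a : ℝ} (ha : 0 ≤ a) {x z y : F} (hz : ‖z - y‖ ≤ ‖x - y‖) :
    ‖(1 - a) • x + a • z - y‖ ^ 2 + a * (1 - a) * ‖x - z‖ ^ 2 ≤ ‖x - y‖ ^ 2 := by
  have hsplit : (1 - a) • x + a • z - y = (1 - a) • (x - y) + a • (z - y) := by module
  have hsq : ‖z - y‖ ^ 2 ≤ ‖x - y‖ ^ 2 := pow_le_pow_left₀ (norm_nonneg _) hz 2
  rw [hsplit, norm_one_sub_smul_add_smul_sq, sub_sub_sub_cancel_right]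
  nlinarith

namespace KrasnoselskiiMann

section Normed

variable {E : Type*} [NormedAddCommGroup E] [NormedSpace ℝ E]
  {C : Set E} {T : E → E} {α : ℕ → ℝ} {x : ℕ → E}

lemma iterate_mem (hC : Convex ℝ C) (hTC : Set.MapsTo T C C)
    (hα : ∀ k, α k ∈ Set.Icc (0 : ℝ) 1) (hx0 : x 0 ∈ C)
    (hx : ∀ k, x (k + 1) = (1 - α (k + 1)) • x k + α (k + 1) • T (x k)) (k : ℕ) :
    x k ∈ C := by
  induction k with
  | zero => exact hx0
  | succ k ih =>
    rw [hx k]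
    exact hC ih (hTC ih) (sub_nonneg.2 (hα (k + 1)).2) (hα (k + 1)).1 (sub_add_cancel 1 _)

lemma residual_antitone (hT : ∀ x ∈ C, ∀ y ∈ C, ‖T x - T y‖ ≤ ‖x - y‖)
    (hα : ∀ k, α k ∈ Set.Icc (0 : ℝ) 1) (hmem : ∀ k, x k ∈ C)
    (hx : ∀ k, x (k + 1) = (1 - α (k + 1)) • x k + α (k + 1) • T (x k)) :
    Antitone fun k ↦ ‖x k - T (x k)‖ := by
  refine antitone_nat_of_succ_le fun k ↦ ?_
  obtain ⟨ha0, ha1⟩ := hα (k + 1)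
  set a := α (k + 1)
  have hresidual :
      x (k + 1) - T (x (k + 1)) = (1 - a) • (x k - T (x k)) + (T (x k) - T (x (k + 1))) := by
    rw [hx k]; module
  have hmove : ‖x k - x (k + 1)‖ = a * ‖x k - T (x k)‖ := by
    rw [hx k, show x k - ((1 - a) • x k + a • T (x k)) = a • (x k - T (x k)) by module,
      norm_smul, Real.norm_of_nonneg ha0]
  calc ‖x (k + 1) - T (x (k + 1))‖
      ≤ ‖(1 - a) • (x k - T (x k))‖ + ‖T (x k) - T (x (k + 1))‖ := hresidual ▸ norm_add_le _ _
    _ ≤ (1 - a) * ‖x k - T (x k)‖ + a * ‖x k - T (x k)‖ := by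
        rw [norm_smul, Real.norm_of_nonneg (sub_nonneg.2 ha1), ← hmove]
        gcongr
        exact hT _ (hmem k) _ (hmem (k + 1))
    _ = ‖x k - T (x k)‖ := by ring

end Normed

section Hilbert

variable {H : Type*} [NormedAddCommGroup H] [InnerProductSpace ℝ H]
  {T : H → H} {α : ℕ → ℝ} {x : ℕ → H} {y : H}

lemma sum_weighted_residual_sq_add_le (hα : ∀ k, 0 ≤ α k)
    (hx : ∀ k, x (k + 1) = (1 - α (k + 1)) • x k + α (k + 1) • T (x k))
    (hy : ∀ k, ‖T (x k) - y‖ ≤ ‖x k - y‖) (n : ℕ) :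
    ∑ k ∈ range n, α (k + 1) * (1 - α (k + 1)) * ‖x k - T (x k)‖ ^ 2 + ‖x n - y‖ ^ 2
      ≤ ‖x 0 - y‖ ^ 2 := by
  have hfejer : ∀ k, α (k + 1) * (1 - α (k + 1)) * ‖x k - T (x k)‖ ^ 2
      ≤ ‖x k - y‖ ^ 2 - ‖x (k + 1) - y‖ ^ 2 := fun k ↦ by
    have := norm_one_sub_smul_add_smul_sub_sq_add_le (hα (k + 1)) (hy k)
    rw [← hx k] at this
    linarith
  have := sum_le_sum fun k (_ : k ∈ range n) ↦ hfejer k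
  rw [sum_range_sub' (fun k ↦ ‖x k - y‖ ^ 2)] at this
  linarith

lemma residual_mul_sqrt_sum_le (hα : ∀ k, α k ∈ Set.Icc (0 : ℝ) 1)
    (hx : ∀ k, x (k + 1) = (1 - α (k + 1)) • x k + α (k + 1) • T (x k))
    (hanti : Antitone fun k ↦ ‖x k - T (x k)‖) (hy : ∀ k, ‖T (x k) - y‖ ≤ ‖x k - y‖) (n : ℕ) :
    ‖x (n - 1) - T (x (n - 1))‖ * √(∑ i ∈ Icc 1 n, α i * (1 - α i)) ≤ ‖x 0 - y‖ := by
  have hweight : ∀ i, 0 ≤ α i * (1 - α i) := fun i ↦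
    mul_nonneg (hα i).1 (sub_nonneg.2 (hα i).2)
  have hreindex : ∑ i ∈ Icc 1 n, α i * (1 - α i) = ∑ k ∈ range n, α (k + 1) * (1 - α (k + 1)) := by
    rw [range_eq_Ico, sum_Ico_add' (fun i ↦ α i * (1 - α i)), Ico_add_one_right_eq_Icc, zero_add]
  have hlast : (∑ k ∈ range n, α (k + 1) * (1 - α (k + 1))) * ‖x (n - 1) - T (x (n - 1))‖ ^ 2
      ≤ ∑ k ∈ range n, α (k + 1) * (1 - α (k + 1)) * ‖x k - T (x k)‖ ^ 2 := by
    rw [sum_mul]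
    refine sum_le_sum fun k hk ↦ ?_
    have hk : k ≤ n - 1 := Nat.le_sub_one_of_lt (mem_range.1 hk)
    gcongr
    · exact hweight (k + 1)
    · exact hanti hk
  have hsum := sum_weighted_residual_sq_add_le (fun k ↦ (hα k).1) hx hy n
  refine (pow_le_pow_iff_left₀ (by positivity) (norm_nonneg _) two_ne_zero).1 ?_
  rw [mul_pow, Real.sq_sqrt (sum_nonneg fun i _ ↦ hweight i), hreindex]
  nlinarith [sq_nonneg ‖x n - y‖]

end Hilbert

end KrasnoselskiiMann

open KrasnoselskiiMann

theorem km_fixed_point_bound_general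
    {H : Type*} [NormedAddCommGroup H] [InnerProductSpace ℝ H]
    (C : Set H) (hCconv : Convex ℝ C)
    (T : H → H) (hTmaps : Set.MapsTo T C C)
    (hT : ∀ x ∈ C, ∀ y ∈ C, ‖T x - T y‖ ≤ ‖x - y‖)
    (α : ℕ → ℝ) (hα : ∀ k, α k ∈ Set.Icc (0:ℝ) 1)
    (x : ℕ → H) (hx0 : x 0 ∈ C)
    (hx : ∀ k, x (k + 1) = (1 - α (k + 1)) • x k + α (k + 1) • T (x k))
    (hfix : ∃ y ∈ C, T y = y)
    (n : ℕ) :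
    ‖x n - T (x n)‖ * Real.sqrt (∑ i ∈ Finset.Icc 1 n, α i * (1 - α i))
        ≤ Metric.infDist (x 0) {y | y ∈ C ∧ T y = y} ∧
    ‖x (n - 1) - T (x (n - 1))‖ * Real.sqrt (∑ i ∈ Finset.Icc 1 n, α i * (1 - α i))
        ≤ Metric.infDist (x 0) {y | y ∈ C ∧ T y = y} := by
  have hmem := iterate_mem hCconv hTmaps hα hx0 hx
  have hanti := residual_antitone hT hα hmem hx
  have hsharp : ‖x (n - 1) - T (x (n - 1))‖ * √(∑ i ∈ Icc 1 n, α i * (1 - α i))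
      ≤ Metric.infDist (x 0) {y | y ∈ C ∧ T y = y} := by
    refine (Metric.le_infDist hfix).2 fun y ⟨hyC, hTy⟩ ↦ ?_
    rw [dist_eq_norm]
    refine residual_mul_sqrt_sum_le hα hx hanti (fun k ↦ ?_) n
    simpa only [hTy] using hT _ (hmem k) y hyC
  exact ⟨(mul_le_mul_of_nonneg_right (hanti (n.sub_le 1)) (Real.sqrt_nonneg _)).trans hsharp,
    hsharp⟩

/-- In a Hilbert space, if `Fix(T) ≠ ∅`, then for every `n ≥ 1` the
Krasnosel'skii–Mann iterates satisfy
`‖x_n − T x_n‖ · √(Σ_{i=1}^n α_i(1−α_i)) ≤ dist(x_0, Fix T)`, and in fact the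
sharper estimate with `x_{n−1}` in place of `x_n` holds. -/
theorem km_fixed_point_bound
    {H : Type*} [NormedAddCommGroup H] [InnerProductSpace ℝ H]
    (C : Set H) (hCne : C.Nonempty) (hCconv : Convex ℝ C)
    (T : H → H) (hTmaps : Set.MapsTo T C C)
    (hT : ∀ x ∈ C, ∀ y ∈ C, ‖T x - T y‖ ≤ ‖x - y‖)
    (α : ℕ → ℝ) (hα : ∀ k, α k ∈ Set.Icc (0:ℝ) 1)
    (x : ℕ → H) (hx0 : x 0 ∈ C)
    (hx : ∀ k, x (k + 1) = (1 - α (k + 1)) • x k + α (k + 1) • T (x k))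
    (hfix : ∃ y ∈ C, T y = y)
    (n : ℕ) (hn : 1 ≤ n) :
    ‖x n - T (x n)‖ * Real.sqrt (∑ i ∈ Finset.Icc 1 n, α i * (1 - α i))
        ≤ Metric.infDist (x 0) {y | y ∈ C ∧ T y = y} ∧
    ‖x (n - 1) - T (x (n - 1))‖ * Real.sqrt (∑ i ∈ Finset.Icc 1 n, α i * (1 - α i))
        ≤ Metric.infDist (x 0) {y | y ∈ C ∧ T y = y} :=
  km_fixed_point_bound_general C hCconv T hTmaps hT α hα x hx0 hx hfix n
end
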